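/- arXiv:0811.1013 — 3 statements merged into one kernel-verified Lean document; each statement's English description precedes it below -/
import Mathlib

section
/- Let I be an artinian monomial ideal in R = k[x_1,…,x_n]. Then I equals the intersection of the irreducible monomial ideals m^μ taken over all maximal corners μ of I: I = ⋂_{μ maximal corner of I} m^μ. -/
open MvPolynomial

/-- The monomial `X^ν = ∏ i, x_i ^ ν i` in `k[x_1, …, x_n]`. -/
noncomputable def Xpow (k : Type) [Field k] (n : ℕ) (ν : Fin n → ℕ) :
    MvPolynomial (Fin n) k :=
  ∏ i, X i ^ ν i

lemma Xpow_eq (k : Type) [Field k] (n : ℕ) (ν : Fin n → ℕ) :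
    Xpow k n ν = monomial (Finsupp.equivFunOnFinite.symm ν) (1 : k) := by
  rw [monomial_eq, C_1, one_mul, Finsupp.prod_fintype]
  · simp [Xpow]
  · intro i; exact pow_zero _

lemma Xpow_mul (k : Type) [Field k] (n : ℕ) (ν σ : Fin n → ℕ) :
    Xpow k n ν * Xpow k n σ = Xpow k n (ν + σ) := by
  simp [Xpow, ← Finset.prod_mul_distrib, ← pow_add]

lemma Xpow_dvd_mem (k : Type) [Field k] (n : ℕ) {I : Ideal (MvPolynomial (Fin n) k)}
    {ν σ : Fin n → ℕ} (h : Xpow k n ν ∈ I) (hle : ∀ i, ν i ≤ σ i) :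
    Xpow k n σ ∈ I := by
  have : Xpow k n (fun i => σ i - ν i) * Xpow k n ν = Xpow k n σ := by
    rw [Xpow_mul]
    congr 1; funext i; have := hle i; simp only [Pi.add_apply]; omega
  rw [← this]
  exact Ideal.mul_mem_left _ _ h

lemma mem_span_Xpow (k : Type) [Field k] (n : ℕ) (S : Set (Fin n → ℕ))
    (f : MvPolynomial (Fin n) k) :
    f ∈ Ideal.span (Xpow k n '' S) ↔
      ∀ d ∈ f.support, ∃ ν ∈ S, ∀ i, ν i ≤ d i := by
  constructor
  · intro hf
    let J : Ideal (MvPolynomial (Fin n) k) :=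
      { carrier := {g | ∀ d ∈ g.support, ∃ ν ∈ S, ∀ i, ν i ≤ d i}
        zero_mem' := by simp
        add_mem' := by
          intro a b ha hb d hd
          rcases Finset.mem_union.mp (MvPolynomial.support_add hd) with h | h
          · exact ha d h
          · exact hb d h
        smul_mem' := by
          intro c g hg d hd
          rw [smul_eq_mul] at hd
          obtain ⟨a, ha, b, hb, rfl⟩ := Finset.mem_add.mp (MvPolynomial.support_mul _ _ hd)
          obtain ⟨ν, hν, hle⟩ := hg b hb
          exact ⟨ν, hν, fun i => le_trans (hle i) (by simp)⟩ }
    have : Ideal.span (Xpow k n '' S) ≤ J := by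
      rw [Ideal.span_le]
      rintro _ ⟨ν, hν, rfl⟩ d hd
      classical
      rw [Xpow_eq, support_monomial, if_neg one_ne_zero, Finset.mem_singleton] at hd
      subst hd
      exact ⟨ν, hν, fun i => by simp⟩
    exact this hf
  · intro h
    rw [f.as_sum]
    refine Ideal.sum_mem _ fun d hd => ?_
    obtain ⟨ν, hν, hle⟩ := h d hd
    have hle' : Finsupp.equivFunOnFinite.symm ν ≤ d := by
      rw [Finsupp.le_def]; intro i; simpa using hle i
    have : (monomial d) (coeff d f) =
        (monomial (d - Finsupp.equivFunOnFinite.symm ν)) (coeff d f) * Xpow k n ν := by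
      rw [Xpow_eq, monomial_mul, mul_one, tsub_add_cancel_of_le hle']
    rw [this]
    exact Ideal.mul_mem_left _ _ (Ideal.subset_span ⟨ν, hν, rfl⟩)

lemma Xpow_single (k : Type) [Field k] (n : ℕ) (i : Fin n) (m : ℕ) :
    Xpow k n (Pi.single i m) = X i ^ m := by
  rw [Xpow, Finset.prod_eq_single i]
  · simp
  · intro j _ hj; simp [Pi.single_eq_of_ne hj]
  · simp

/-- The lowered multidegree: subtract one from every entry (truncated at 0). -/
def low {n : ℕ} (μ : Fin n → ℕ) : Fin n → ℕ := fun i => μ i - 1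

/-- The irreducible monomial ideal `m^μ = ⟨x_i^{μ_i} : μ_i ≠ 0⟩`. -/
noncomputable def mIdeal (k : Type) [Field k] (n : ℕ) (μ : Fin n → ℕ) :
    Ideal (MvPolynomial (Fin n) k) :=
  Ideal.span ((fun i => (X i : MvPolynomial (Fin n) k) ^ μ i) '' {i | μ i ≠ 0})

lemma mem_mIdeal (k : Type) [Field k] (n : ℕ) (μ : Fin n → ℕ)
    (f : MvPolynomial (Fin n) k) :
    f ∈ mIdeal k n μ ↔ ∀ d ∈ f.support, ∃ i, μ i ≠ 0 ∧ μ i ≤ d i := by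
  have himg : ((fun i => (X i : MvPolynomial (Fin n) k) ^ μ i) '' {i | μ i ≠ 0}) =
      Xpow k n '' ((fun i => Pi.single i (μ i)) '' {i | μ i ≠ 0}) := by
    rw [Set.image_image]
    apply Set.image_congr
    intro i _
    rw [Xpow_single]
  rw [mIdeal, himg, mem_span_Xpow]
  constructor
  · intro h d hd
    obtain ⟨ν, hν, hle⟩ := h d hd
    obtain ⟨i, hi, rfl⟩ := hν
    exact ⟨i, hi, by simpa using hle i⟩
  · intro h d hd
    obtain ⟨i, hi, hle⟩ := h d hd
    refine ⟨Pi.single i (μ i), ⟨i, hi, rfl⟩, fun j => ?_⟩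
    rcases eq_or_ne j i with rfl | hne
    · simpa using hle
    · simp [Pi.single_eq_of_ne hne]

/-- A monomial ideal: an ideal generated by a set of monomials. -/
def IsMonomialIdeal {k : Type} [Field k] {n : ℕ}
    (I : Ideal (MvPolynomial (Fin n) k)) : Prop :=
  ∃ S : Set (Fin n → ℕ), I = Ideal.span (Xpow k n '' S)

/-- `μ` is a maximal corner of `I`: `μ` has full support, `x_i · X^{low μ} ∈ I`
for every `i`, and `X^{low μ} ∉ I`. -/
def IsMaximalCorner {k : Type} [Field k] {n : ℕ}
    (I : Ideal (MvPolynomial (Fin n) k)) (μ : Fin n → ℕ) : Prop :=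
  (∀ i, μ i ≠ 0) ∧
    (∀ i, (X i : MvPolynomial (Fin n) k) * Xpow k n (low μ) ∈ I) ∧
    Xpow k n (low μ) ∉ I

/-- An artinian monomial ideal is the intersection of the
irreducible ideals `m^μ` over the maximal corners `μ` of `I`. -/
theorem stmt2 (k : Type) [Field k] (n : ℕ) (I : Ideal (MvPolynomial (Fin n) k))
    (hmon : IsMonomialIdeal I)
    (hart : ∀ i : Fin n, ∃ a : ℕ, (X i : MvPolynomial (Fin n) k) ^ a ∈ I) :
    I = ⨅ μ ∈ {μ : Fin n → ℕ | IsMaximalCorner I μ}, mIdeal k n μ := by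
  classical
  obtain ⟨S, hI⟩ := hmon
  -- membership in I for monomials
  have hXmem : ∀ τ : Fin n → ℕ, Xpow k n τ ∈ I ↔ ∃ ν ∈ S, ∀ i, ν i ≤ τ i := by
    intro τ
    rw [hI, mem_span_Xpow]
    constructor
    · intro h
      obtain ⟨ν, hν, hle⟩ := h (Finsupp.equivFunOnFinite.symm τ) (by
        rw [Xpow_eq, support_monomial, if_neg one_ne_zero]; simp)
      exact ⟨ν, hν, fun i => by simpa using hle i⟩
    · intro h d hd
      rw [Xpow_eq, support_monomial, if_neg one_ne_zero, Finset.mem_singleton] at hd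
      subst hd
      obtain ⟨ν, hν, hle⟩ := h
      exact ⟨ν, hν, fun i => by simpa using hle i⟩
  apply le_antisymm
  · -- I ≤ intersection
    refine le_iInf₂ fun μ hμ => ?_
    obtain ⟨hfull, hx, hnot⟩ := hμ
    intro f hf
    rw [mem_mIdeal]
    intro d hd
    rw [hI, mem_span_Xpow] at hf
    obtain ⟨ν, hν, hle⟩ := hf d hd
    by_contra hc
    push_neg at hc
    apply hnot
    refine Xpow_dvd_mem k n ((hXmem ν).mpr ⟨ν, hν, fun i => le_rfl⟩) fun i => ?_
    have h1 := hc i (hfull i)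
    have h2 := hle i
    simp only [low]
    omega
  · -- intersection ≤ I
    intro f hf
    simp only [Ideal.mem_iInf, Set.mem_setOf_eq] at hf
    rw [hI, mem_span_Xpow]
    intro d hd
    by_contra hc
    push_neg at hc
    -- build a maximal corner μ with d ≤ low μ
    choose a ha using hart
    set T : Set (Fin n → ℕ) := {τ | (∀ i, d i ≤ τ i) ∧ Xpow k n τ ∉ I} with hT
    have hdT : (d : Fin n → ℕ) ∈ T := by
      refine ⟨fun i => le_rfl, fun h => ?_⟩
      obtain ⟨ν, hν, hle⟩ := (hXmem _).mp h
      obtain ⟨i, hi⟩ := hc ν hν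
      exact absurd (hle i) (by omega)
    have hbound : ∀ τ ∈ T, ∀ i, τ i < a i := by
      intro τ hτ i
      by_contra hge
      push_neg at hge
      apply hτ.2
      have : Xpow k n (Pi.single i (a i)) ∈ I := by rw [Xpow_single]; exact ha i
      refine Xpow_dvd_mem k n this fun j => ?_
      rcases eq_or_ne j i with rfl | hne
      · simpa using hge
      · simp [Pi.single_eq_of_ne hne]
    set N : ℕ := ∑ i, a i with hN
    have hsum_le : ∀ τ ∈ T, ∑ i, τ i ≤ N := by
      intro τ hτ
      exact Finset.sum_le_sum fun i _ => le_of_lt (hbound τ hτ i)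
    set P : ℕ → Prop := fun m => ∃ τ ∈ T, ∑ i, τ i = m with hP
    set M : ℕ := Nat.findGreatest P N with hM
    have hPM : P M :=
      Nat.findGreatest_spec (hsum_le _ hdT) ⟨(d : Fin n → ℕ), hdT, rfl⟩
    obtain ⟨τ, hτT, hτsum⟩ := hPM
    have hmax : ∀ τ' ∈ T, ∑ i, τ' i ≤ M := by
      intro τ' hτ'
      exact Nat.le_findGreatest (hsum_le _ hτ') ⟨τ', hτ', rfl⟩
    set μ : Fin n → ℕ := fun i => τ i + 1 with hμdef
    have hlow : low μ = τ := by funext i; simp [low, hμdef]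
    have hcorner : IsMaximalCorner I μ := by
      refine ⟨fun i => by simp [hμdef], fun i => ?_, by rw [hlow]; exact hτT.2⟩
      rw [hlow]
      have hXi : (X i : MvPolynomial (Fin n) k) = Xpow k n (Pi.single i 1) := by
        rw [Xpow_single, pow_one]
      rw [hXi, Xpow_mul]
      by_contra hnotin
      have hmem : (Pi.single i 1 + τ) ∈ T := by
        refine ⟨fun j => le_trans (hτT.1 j) (by simp), hnotin⟩
      have := hmax _ hmem
      simp only [Pi.add_apply, Finset.sum_add_distrib, hτsum, Finset.sum_pi_single] at this
      simp at this
    have := (mem_mIdeal k n μ f).mp (hf μ hcorner) d hd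
    obtain ⟨i, _, hi⟩ := this
    have := hτT.1 i
    simp only [hμdef] at hi
    omega
end

section
/- Let I be a monomial ideal in R = k[x_1,…,x_n]. If μ and ν are two distinct maximal corners of I, then μ and ν are incomparable in the componentwise order: it is not the case that μ_i ≤ ν_i for all i. Consequently, for distinct maximal corners μ ≠ ν one has m^ν ⊄ m^μ, so the intersection ⋂_{μ maximal corner} m^μ is irredundant. -/
open MvPolynomial

lemma Xpow_add (k : Type) [Field k] (n : ℕ) (a b : Fin n → ℕ) :
    Xpow k n (fun i => a i + b i) = Xpow k n a * Xpow k n b := by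
  simp [Xpow, pow_add, Finset.prod_mul_distrib]

lemma incomparable (k : Type) [Field k] (n : ℕ) (I : Ideal (MvPolynomial (Fin n) k))
    (μ ν : Fin n → ℕ) (hμ : IsMaximalCorner I μ) (hν : IsMaximalCorner I ν)
    (hne : μ ≠ ν) : ¬ ∀ i, μ i ≤ ν i := by
  intro hle
  obtain ⟨j, hj⟩ : ∃ j, μ j < ν j := by
    by_contra h
    push_neg at h
    exact hne (funext fun i => le_antisymm (hle i) (h i))
  apply hν.2.2
  set d : Fin n → ℕ := fun i => low ν i - (low μ i + if i = j then 1 else 0) with hd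
  have hsum : ∀ i, (low μ i + if i = j then 1 else 0) + d i = low ν i := by
    intro i
    have h1 := hle i
    have h2 := hμ.1 i
    have h3 := hν.1 i
    simp only [hd, low]
    split_ifs with hij
    · subst hij; omega
    · omega
  have key : Xpow k n (low ν) = (X j * Xpow k n (low μ)) * Xpow k n d := by
    have h1 : Xpow k n (low ν) = Xpow k n (fun i => (low μ i + if i = j then 1 else 0) + d i) := by
      congr 1; exact funext fun i => (hsum i).symm
    rw [h1, Xpow_add]
    congr 1
    rw [show (fun i => low μ i + if i = j then 1 else 0) = fun i => (if i = j then 1 else 0) + low μ i from funext fun i => by omega, Xpow_add]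
    congr 1
    simp [Xpow, pow_ite]
  rw [key]
  exact Ideal.mul_mem_right _ _ (hμ.2.1 j)

/-- Two distinct maximal corners of a monomial ideal are
incomparable componentwise; consequently `m^ν ⊄ m^μ`, so the intersection of
the `m^μ` over the maximal corners is irredundant. -/
theorem stmt3 (k : Type) [Field k] (n : ℕ) (I : Ideal (MvPolynomial (Fin n) k))
    (hmon : IsMonomialIdeal I) (μ ν : Fin n → ℕ) (hμ : IsMaximalCorner I μ)
    (hν : IsMaximalCorner I ν) (hne : μ ≠ ν) :
    (¬ ∀ i, μ i ≤ ν i) ∧ ¬ mIdeal k n ν ≤ mIdeal k n μ := by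
  refine ⟨incomparable k n I μ ν hμ hν hne, fun hsub => ?_⟩
  apply incomparable k n I μ ν hμ hν hne
  intro i
  have hgen : (X i : MvPolynomial (Fin n) k) ^ ν i ∈ mIdeal k n ν :=
    Ideal.subset_span ⟨i, hν.1 i, rfl⟩
  have hmem := hsub hgen
  have himg : ((fun i => (X i : MvPolynomial (Fin n) k) ^ μ i) '' {i | μ i ≠ 0}) =
      ((fun s => monomial s (1 : k)) '' ((fun i => Finsupp.single i (μ i)) '' {i | μ i ≠ 0})) := by
    rw [Set.image_image]
    exact Set.image_congr fun j _ => (X_pow_eq_monomial)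
  rw [mIdeal, himg, mem_ideal_span_monomial_image] at hmem
  rw [X_pow_eq_monomial] at hmem
  obtain ⟨si, ⟨j, hj, rfl⟩, hle⟩ := hmem (Finsupp.single i (ν i))
    (mem_support_iff.mpr (by simp))
  have hj' := hle j
  rw [Finsupp.single_apply, if_pos rfl] at hj'
  rcases eq_or_ne j i with rfl | hji
  · rwa [Finsupp.single_apply, if_pos rfl] at hj'
  · rw [Finsupp.single_apply, if_neg (Ne.symm hji)] at hj'
    exact absurd (Nat.le_zero.mp hj') hj
end

section
/- Let I be a proper monomial ideal in R = k[x_1,…,x_n] admitting a Stanley decomposition {(μ_j, S_j)}_{j∈F}, and let d be the maximum of the cardinalities |S_j| for j ∈ F. Then the Krull dimension of the quotient ring R/I equals d. -/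
open MvPolynomial

/-- The Stanley cone `X^μ · k[x_i : i ∈ S]`, described by exponent vectors:
`ν` lies in the cone iff it agrees with `μ` outside `S` and dominates `μ` on `S`. -/
def stanleyCone {n : ℕ} (μ : Fin n → ℕ) (S : Finset (Fin n)) : Set (Fin n → ℕ) :=
  {ν | (∀ i ∉ S, ν i = μ i) ∧ ∀ i ∈ S, μ i ≤ ν i}


/-! ### Auxiliary machinery -/

section Aux

open Order

variable {k : Type} [Field k] {σ : Type}

section Quot
variable (k)

/-- Evaluation killing variables outside `T`. -/
noncomputable def sdKillOut (T : Set σ) [DecidablePred (· ∈ T)] :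
    MvPolynomial σ k →ₐ[k] MvPolynomial T k :=
  aeval (fun i => if h : i ∈ T then X ⟨i, h⟩ else 0)

/-- Quotient of a polynomial ring by a set of variables. -/
noncomputable def sdQuotEquiv (T : Set σ) [DecidablePred (· ∈ T)] :
    (MvPolynomial σ k ⧸ Ideal.span ((fun i => (X i : MvPolynomial σ k)) '' Tᶜ)) ≃ₐ[k]
      MvPolynomial T k := by
  set J : Ideal (MvPolynomial σ k) := Ideal.span ((fun i => (X i : MvPolynomial σ k)) '' Tᶜ)
    with hJ
  refine AlgEquiv.ofAlgHom
    (Ideal.Quotient.liftₐ J (sdKillOut k T) ?_)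
    (aeval (fun i : T => Ideal.Quotient.mkₐ k J (X (i : σ)))) ?_ ?_
  · intro a ha
    refine Submodule.span_induction ?_ ?_ ?_ ?_ ha
    · rintro x ⟨i, hi, rfl⟩
      simp [sdKillOut, dif_neg hi]
    · simp
    · intro x y _ _ hx hy; simp [map_add, hx, hy]
    · intro r x _ hx
      have : sdKillOut k T (r • x) = sdKillOut k T r * sdKillOut k T x := by
        simp [smul_eq_mul]
      simp [this, hx]
  · apply MvPolynomial.algHom_ext
    intro i
    simp only [AlgHom.comp_apply, aeval_X, Ideal.Quotient.mkₐ_eq_mk, Ideal.Quotient.liftₐ_apply, Ideal.Quotient.lift_mk]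
    simp [sdKillOut]
  · apply Ideal.Quotient.algHom_ext
    apply MvPolynomial.algHom_ext
    intro i
    by_cases h : i ∈ T
    · simp only [AlgHom.comp_apply, aeval_X, Ideal.Quotient.mkₐ_eq_mk, Ideal.Quotient.liftₐ_apply, Ideal.Quotient.lift_mk]
      simp [sdKillOut, dif_pos h]
    · have hX : (X i : MvPolynomial σ k) ∈ J := Ideal.subset_span ⟨i, h, rfl⟩
      have h0 : (Ideal.Quotient.mk J) (X i) = 0 := Ideal.Quotient.eq_zero_iff_mem.mpr hX
      simp only [AlgHom.coe_comp, Function.comp_apply, Ideal.Quotient.mkₐ_eq_mk, h0]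
      simp [sdKillOut, dif_neg h]

end Quot

variable [Fintype σ]

/-- Any `card σ < m` elements of `k[x : σ]` are algebraically dependent. -/
theorem sd_nodep (m : ℕ) (hm : Fintype.card σ < m) (t : Fin m → MvPolynomial σ k) :
    ∃ Q : MvPolynomial (Fin m) k, Q ≠ 0 ∧ aeval t Q = 0 := by
  classical
  set n := Fintype.card σ with hn
  set e : ℕ := (Finset.univ.sup fun i => (t i).totalDegree) with he
  have he' : ∀ i, (t i).totalDegree ≤ e := fun i => by
    rw [he]; exact Finset.le_sup (f := fun i => (t i).totalDegree) (Finset.mem_univ i)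
  set E : ℕ := m * e + 1 with hE
  set D : ℕ := E ^ n + 1 with hD
  set M : ℕ := m * ((D - 1) * e) with hM
  set v : (Fin m → Fin D) → MvPolynomial σ k := fun β => ∏ i, t i ^ (β i : ℕ) with hv
  have hdeg : ∀ β, (v β).totalDegree ≤ M := by
    intro β
    calc (v β).totalDegree ≤ ∑ i, ((t i) ^ (β i : ℕ)).totalDegree :=
          totalDegree_finset_prod _ _
      _ ≤ ∑ i : Fin m, (D - 1) * e := by
          refine Finset.sum_le_sum fun i _ => ?_
          calc ((t i) ^ (β i : ℕ)).totalDegree ≤ (β i : ℕ) * (t i).totalDegree :=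
                totalDegree_pow _ _
            _ ≤ (D - 1) * e := by
                have h1 : (β i : ℕ) ≤ D - 1 := Nat.le_sub_one_of_lt (β i).isLt
                exact Nat.mul_le_mul h1 (he' i)
      _ = M := by simp [hM, Finset.sum_const, mul_comm]
  set V := restrictDegree σ k M with hV
  have hmem : ∀ β, v β ∈ V := fun β =>
    restrictTotalDegree_le_restrictDegree _ _ M ((mem_restrictTotalDegree σ M _).mpr (hdeg β))
  set w : (Fin m → Fin D) → V := fun β => ⟨v β, hmem β⟩ with hw
  have hfr : Module.finrank k V ≤ (M + 1) ^ n := by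
    haveI : Finite {s : σ →₀ ℕ | ∀ a, s a ≤ M} := by
      exact ((Set.Finite.pi' fun _ ↦ Set.finite_le_nat _).preimage
        DFunLike.coe_injective.injOn).to_subtype
    haveI : Fintype {s : σ →₀ ℕ | ∀ a, s a ≤ M} := Fintype.ofFinite _
    have hcard : Module.finrank k V = Fintype.card {s : σ →₀ ℕ | ∀ a, s a ≤ M} :=
      Module.finrank_eq_card_basis (basisRestrictSupport k _)
    rw [hcard]
    have : Fintype.card {s : σ →₀ ℕ | ∀ a, s a ≤ M} ≤ Fintype.card (σ → Fin (M + 1)) := by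
      refine Fintype.card_le_of_injective
        (fun s => fun a => ⟨s.1 a, Nat.lt_succ_of_le (s.2 a)⟩) ?_
      intro s s' hss
      ext a
      exact congrArg Fin.val (congrFun hss a)
    simpa [Fintype.card_fun] using this
  have hcount : Module.finrank k V < Fintype.card (Fin m → Fin D) := by
    have h1 : (M + 1) ≤ E * D := by
      have : M + 1 ≤ m * (D * e) + 1 := by
        have : (D - 1) * e ≤ D * e := Nat.mul_le_mul_right _ (Nat.sub_le _ _)
        simpa [hM] using Nat.add_le_add_right (Nat.mul_le_mul_left m this) 1
      calc M + 1 ≤ m * (D * e) + 1 := this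
        _ = m * e * D + 1 := by ring
        _ ≤ m * e * D + D := by
            exact Nat.add_le_add_left (Nat.one_le_iff_ne_zero.mpr (by positivity)) _
        _ = E * D := by ring
    have h2 : (M + 1) ^ n ≤ (E * D) ^ n := Nat.pow_le_pow_left h1 n
    have h3 : (E * D) ^ n = E ^ n * D ^ n := mul_pow E D n
    have h4 : E ^ n * D ^ n < D * D ^ n := by
      have hD1 : E ^ n < D := by omega
      have : (0:ℕ) < D ^ n := by positivity
      exact Nat.mul_lt_mul_of_lt_of_le hD1 le_rfl this
    have h5 : D * D ^ n ≤ D ^ m := by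
      have : n + 1 ≤ m := hm
      calc D * D ^ n = D ^ (n + 1) := (pow_succ' D n).symm
        _ ≤ D ^ m := Nat.pow_le_pow_right (by positivity) this
    have : Fintype.card (Fin m → Fin D) = D ^ m := by simp [Fintype.card_fun]
    omega
  have : ¬ LinearIndependent k w := fun h => absurd (h.fintype_card_le_finrank) (not_le.mpr hcount)
  obtain ⟨g, hgsum, β₀, hβ₀⟩ := Fintype.not_linearIndependent_iff.mp this
  set toExp : (Fin m → Fin D) → (Fin m →₀ ℕ) :=
    fun β => Finsupp.equivFunOnFinite.symm (fun i => (β i : ℕ)) with htoExp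
  have htoExpInj : Function.Injective toExp := by
    intro a b hab
    funext i
    have h2 : (toExp a) i = (toExp b) i := by rw [hab]
    simp only [htoExp, Finsupp.equivFunOnFinite_symm_apply_apply] at h2
    exact Fin.ext h2
  set Q : MvPolynomial (Fin m) k := ∑ β : Fin m → Fin D, monomial (toExp β) (g β) with hQ
  refine ⟨Q, ?_, ?_⟩
  · intro h0
    apply hβ₀
    have := congrArg (coeff (toExp β₀)) h0
    rw [hQ] at this
    simp only [coeff_zero] at this
    rw [coeff_sum] at this
    rw [Finset.sum_eq_single β₀] at this
    · simpa [coeff_monomial] using this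
    · intro b _ hb
      rw [coeff_monomial, if_neg (fun h => hb (htoExpInj h))]
    · simp
  · have : aeval t Q = ∑ β : Fin m → Fin D, g β • v β := by
      rw [hQ, map_sum]
      refine Finset.sum_congr rfl fun β _ => ?_
      rw [aeval_monomial, Finsupp.prod_fintype _ _ (fun i => pow_zero _)]
      simp [Algebra.smul_def, hv, htoExp]
    rw [this]
    have := congrArg (Subtype.val) hgsum
    simpa using this

set_option linter.unusedSectionVars false in
/-- Coquand–Lombardi style core: a strictly separated chain plus an algebraic
relation yields a contradiction. -/
theorem sd_cl_core (m : ℕ) (hm0 : 0 < m) (q : ℕ → Ideal (MvPolynomial σ k))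
    (hprime : ∀ j, (q j).IsPrime) (hmono : Monotone q)
    (t : ℕ → MvPolynomial σ k)
    (ht1 : ∀ i, i < m → t i ∈ q (i + 1)) (ht2 : ∀ i, i < m → t i ∉ q i)
    (Q : MvPolynomial (Fin m) k) (hQ : Q ≠ 0)
    (hQ0 : aeval (fun i : Fin m => t (i : ℕ)) Q = 0) : False := by
  classical
  obtain ⟨α, hα, hmin⟩ := Finset.exists_min_image Q.support (fun β => toLex β)
    (support_nonempty.mpr hQ)
  set J : (Fin m →₀ ℕ) → Fin m := fun β =>
    if h : ∃ jj : Fin m, (∀ d, d < jj → α d = β d) ∧ α jj < β jj then h.choose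
    else ⟨0, hm0⟩ with hJdef
  have Jspec : ∀ β ∈ Q.support, β ≠ α →
      (∀ d, d < J β → α d = β d) ∧ α (J β) < β (J β) := by
    intro β hβ hne
    have hlt : toLex α < toLex β :=
      lt_of_le_of_ne (hmin β hβ) (fun h => hne (toLex.injective h).symm)
    have hLex : Finsupp.Lex (· < ·) (· < ·) α β := hlt
    obtain ⟨jj, h1, h2⟩ := Finsupp.lex_def.mp hLex
    have hex : ∃ jj : Fin m, (∀ d, d < jj → α d = β d) ∧ α jj < β jj := ⟨jj, h1, h2⟩
    rw [hJdef]
    simp only [dif_pos hex]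
    exact hex.choose_spec
  set Pset : ℕ → Finset (Fin m) := fun j => Finset.univ.filter (fun i : Fin m => j ≤ (i : ℕ))
    with hPset
  set B : ℕ → MvPolynomial σ k := fun j =>
    ∑ β ∈ Q.support.filter (fun β => β = α ∨ j ≤ (J β : ℕ)),
      C (coeff β Q) * ∏ i ∈ Pset j, t (i : ℕ) ^ β i with hB
  have hPj : ∀ j, Pset j = Finset.univ.filter (fun i : Fin m => j ≤ (i : ℕ)) := fun _ => rfl
  have hBj : ∀ j, B j = ∑ β ∈ Q.support.filter (fun β => β = α ∨ j ≤ (J β : ℕ)),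
      C (coeff β Q) * ∏ i ∈ Pset j, t (i : ℕ) ^ β i := fun _ => rfl
  have hB0 : B 0 = 0 := by
    rw [hBj]
    have h1 : Q.support.filter (fun β => β = α ∨ 0 ≤ (J β : ℕ)) = Q.support :=
      Finset.filter_true_of_mem (fun β _ => Or.inr (Nat.zero_le _))
    have h2 : Pset 0 = Finset.univ := by
      rw [hPj]; exact Finset.filter_true_of_mem (fun i _ => Nat.zero_le _)
    rw [h1, h2, ← hQ0, aeval_def, eval₂_eq']
    rfl
  have hBm : B m = C (coeff α Q) := by
    rw [hBj]
    have h1 : Q.support.filter (fun β => β = α ∨ m ≤ (J β : ℕ)) = {α} := by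
      have : Q.support.filter (fun β => β = α ∨ m ≤ (J β : ℕ)) = Q.support.filter (· = α) := by
        refine Finset.filter_congr fun β _ => ?_
        constructor
        · rintro (h | h)
          · exact h
          · exact absurd h (Nat.not_le.mpr (J β).isLt)
        · exact Or.inl
      rw [this, Finset.filter_eq', if_pos hα]
    have h2 : Pset m = ∅ := by
      rw [hPj]
      refine Finset.filter_false_of_mem fun i _ => Nat.not_le.mpr i.isLt
    rw [h1, h2, Finset.sum_singleton, Finset.prod_empty, mul_one]
  have hrec : ∀ j (hj : j < m), ∃ h : MvPolynomial σ k,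
      B j = t j ^ (α ⟨j, hj⟩) * (B (j + 1) + t j * h) := by
    intro j hj
    set fj : Fin m := ⟨j, hj⟩ with hfj
    refine ⟨∑ β ∈ Q.support.filter (fun β => ¬β = α ∧ (J β : ℕ) = j),
      C (coeff β Q) * (t j ^ (β fj - α fj - 1) * ∏ i ∈ Pset (j+1), t (i : ℕ) ^ β i), ?_⟩
    have hsplit : Q.support.filter (fun β => β = α ∨ j ≤ (J β : ℕ)) =
        Q.support.filter (fun β => β = α ∨ j + 1 ≤ (J β : ℕ)) ∪
          Q.support.filter (fun β => ¬β = α ∧ (J β : ℕ) = j) := by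
      rw [← Finset.filter_or]
      refine Finset.filter_congr fun β _ => ?_
      constructor
      · rintro (h | h)
        · exact Or.inl (Or.inl h)
        · by_cases hc : β = α
          · exact Or.inl (Or.inl hc)
          · rcases Nat.lt_or_ge j (J β : ℕ) with h' | h'
            · exact Or.inl (Or.inr h')
            · exact Or.inr ⟨hc, le_antisymm h' h⟩
      · rintro ((h | h) | ⟨h1, h2⟩)
        · exact Or.inl h
        · exact Or.inr (le_of_lt h)
        · exact Or.inr (le_of_eq h2.symm)
    have hdisj : Disjoint (Q.support.filter (fun β => β = α ∨ j + 1 ≤ (J β : ℕ)))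
        (Q.support.filter (fun β => ¬β = α ∧ (J β : ℕ) = j)) := by
      rw [Finset.disjoint_filter]
      rintro β _ (h | h) ⟨h1, h2⟩
      · exact h1 h
      · omega
    have hins : Pset j = insert fj (Pset (j + 1)) := by
      ext i
      simp only [hPset, Finset.mem_filter, Finset.mem_univ, true_and, Finset.mem_insert]
      constructor
      · intro h
        rcases Nat.eq_or_lt_of_le h with h' | h'
        · exact Or.inl (Fin.ext h'.symm)
        · exact Or.inr h'
      · rintro (rfl | h)
        · exact le_rfl
        · omega
    have hnotmem : fj ∉ Pset (j + 1) := by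
      simp [hPset, hfj]
    rw [hBj, hsplit, Finset.sum_union hdisj]
    have e1 : ∑ β ∈ Q.support.filter (fun β => β = α ∨ j + 1 ≤ (J β : ℕ)),
        C (coeff β Q) * ∏ i ∈ Pset j, t (i : ℕ) ^ β i =
        t j ^ (α fj) * B (j + 1) := by
      rw [hBj, Finset.mul_sum]
      refine Finset.sum_congr rfl fun β hβ => ?_
      have hβfj : β fj = α fj := by
        by_cases hc : β = α
        · rw [hc]
        · rcases (Finset.mem_filter.mp hβ).2 with h | h
          · exact absurd h hc
          · refine ((Jspec β (Finset.mem_filter.mp hβ).1 hc).1 fj ?_).symm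
            have hv : (fj : ℕ) = j := rfl
            change (fj : ℕ) < (J β : ℕ)
            omega
      rw [hins, Finset.prod_insert hnotmem, hβfj]
      ring
    have e2 : ∑ β ∈ Q.support.filter (fun β => ¬β = α ∧ (J β : ℕ) = j),
        C (coeff β Q) * ∏ i ∈ Pset j, t (i : ℕ) ^ β i =
        t j ^ (α fj) * (t j * ∑ β ∈ Q.support.filter (fun β => ¬β = α ∧ (J β : ℕ) = j),
          C (coeff β Q) * (t j ^ (β fj - α fj - 1) * ∏ i ∈ Pset (j+1), t (i : ℕ) ^ β i)) := by
      rw [Finset.mul_sum, Finset.mul_sum]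
      refine Finset.sum_congr rfl fun β hβ => ?_
      obtain ⟨hne, hJβ⟩ := (Finset.mem_filter.mp hβ).2
      have hspec := Jspec β (Finset.mem_filter.mp hβ).1 hne
      have hJfj : J β = fj := Fin.ext (by rw [hJβ])
      have hlt : α fj < β fj := by rw [← hJfj]; exact hspec.2
      rw [hins, Finset.prod_insert hnotmem]
      have hexp : β fj = α fj + 1 + (β fj - α fj - 1) := by omega
      calc C (coeff β Q) * (t (fj : ℕ) ^ β fj * ∏ i ∈ Pset (j + 1), t (i : ℕ) ^ β i)
          = C (coeff β Q) * (t (fj : ℕ) ^ (α fj + 1 + (β fj - α fj - 1)) *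
            ∏ i ∈ Pset (j + 1), t (i : ℕ) ^ β i) := by rw [← hexp]
        _ = t j ^ α fj * (t j *
            (C (coeff β Q) * (t j ^ (β fj - α fj - 1) * ∏ i ∈ Pset (j+1), t (i : ℕ) ^ β i))) := by
            have hv : (fj : ℕ) = j := rfl
            rw [hv, pow_add, pow_add, pow_one]
            ring
    rw [e1, e2, ← mul_add]
  have key : ∀ i : ℕ, ∀ j, j ≤ m → m - j = i → B j ∉ q j := by
    intro i
    induction i with
    | zero =>
      intro j hjm hji
      have hjm' : j = m := by omega
      subst hjm'
      rw [hBm]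
      intro hmem
      have hc : coeff α Q ≠ 0 := mem_support_iff.mp hα
      have hunit : IsUnit (C (coeff α Q) : MvPolynomial σ k) :=
        (isUnit_iff_ne_zero.mpr hc).map _
      exact (hprime j).ne_top (Ideal.eq_top_of_isUnit_mem _ hmem hunit)
    | succ i ih =>
      intro j hjm hji
      have hj : j < m := by omega
      obtain ⟨h, hrecj⟩ := hrec j hj
      have ihj : B (j + 1) ∉ q (j + 1) := ih (j + 1) (by omega) (by omega)
      intro hmem
      rw [hrecj] at hmem
      rcases (hprime j).mem_or_mem hmem with h1 | h2
      · exact ht2 j hj ((hprime j).mem_of_pow_mem _ h1)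
      · have hsub : B (j + 1) + t j * h ∈ q (j + 1) := hmono (Nat.le_succ j) h2
        have htj : t j * h ∈ q (j + 1) := Ideal.mul_mem_right _ _ (ht1 j hj)
        have : B (j + 1) ∈ q (j + 1) := by
          have := Ideal.sub_mem _ hsub htj
          simpa using this
        exact ihj this
  have := key m 0 (Nat.zero_le m) (by omega)
  rw [hB0] at this
  exact this (Ideal.zero_mem _)

theorem sd_series_le (p : LTSeries (PrimeSpectrum (MvPolynomial σ k))) :
    p.length ≤ Fintype.card σ := by
  classical
  by_contra hlen
  push_neg at hlen
  set n := Fintype.card σ with hn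
  set m := n + 1 with hm
  have hmL : m ≤ p.length := hlen
  set q : ℕ → Ideal (MvPolynomial σ k) :=
    fun j => (p ⟨min j m, by omega⟩).asIdeal with hq
  have hprime : ∀ j, (q j).IsPrime := fun j => (p _).isPrime
  have hmono : Monotone q := by
    intro a b hab
    have h := p.monotone (show (⟨min a m, by omega⟩ : Fin (p.length + 1)) ≤ ⟨min b m, by omega⟩
      from Fin.mk_le_mk.mpr (by omega))
    exact (PrimeSpectrum.asIdeal_le_asIdeal _ _).mpr h
  have hstrict : ∀ i, i < m → q i < q (i + 1) := by
    intro i hi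
    have h := p.strictMono (show (⟨min i m, by omega⟩ : Fin (p.length + 1)) < ⟨min (i+1) m, by omega⟩
      from Fin.mk_lt_mk.mpr (by omega))
    exact (PrimeSpectrum.asIdeal_lt_asIdeal _ _).mpr h
  set t : ℕ → MvPolynomial σ k := fun i =>
    if h : i < m then (SetLike.exists_of_lt (hstrict i h)).choose else 0 with ht
  have ht1 : ∀ i, i < m → t i ∈ q (i + 1) := by
    intro i hi
    simp only [ht]
    rw [dif_pos hi]
    exact (SetLike.exists_of_lt (hstrict i hi)).choose_spec.1
  have ht2 : ∀ i, i < m → t i ∉ q i := by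
    intro i hi
    simp only [ht]
    rw [dif_pos hi]
    exact (SetLike.exists_of_lt (hstrict i hi)).choose_spec.2
  obtain ⟨Q, hQ, hQ0⟩ := sd_nodep m (by omega) (fun i : Fin m => t (i : ℕ))
  exact sd_cl_core m (by omega) q hprime hmono t ht1 ht2 Q hQ hQ0

theorem sd_dim_le : ringKrullDim (MvPolynomial σ k) ≤ (Fintype.card σ : WithBot ℕ∞) := by
  rw [ringKrullDim, krullDim]
  refine iSup_le fun p => ?_
  exact_mod_cast Nat.cast_le.mpr (sd_series_le p)

theorem sd_span_vars_prime (A : Set σ) :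
    (Ideal.span ((fun i => (X i : MvPolynomial σ k)) '' A)).IsPrime := by
  classical
  have hA : A = ((Aᶜ)ᶜ) := (compl_compl A).symm
  rw [hA, ← Ideal.Quotient.isDomain_iff_prime]
  exact MulEquiv.isDomain (MvPolynomial (↑(Aᶜ) : Set σ) k) (sdQuotEquiv k (Aᶜ)).toRingEquiv.toMulEquiv

theorem sd_dim_quot_le (T : Set σ) [DecidablePred (· ∈ T)] [Fintype T] :
    ringKrullDim (MvPolynomial σ k ⧸
        Ideal.span ((fun i => (X i : MvPolynomial σ k)) '' Tᶜ)) ≤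
      (Fintype.card T : WithBot ℕ∞) := by
  rw [ringKrullDim_eq_of_ringEquiv (sdQuotEquiv k T).toRingEquiv]
  exact sd_dim_le

theorem sd_X_notMem_span (A : Set σ) (x : σ) (hx : x ∉ A) :
    (X x : MvPolynomial σ k) ∉
      Ideal.span ((fun i => (X i : MvPolynomial σ k)) '' A) := by
  classical
  intro hmem
  set ev : MvPolynomial σ k →+* k :=
    (aeval (fun y => if y = x then (1:k) else 0) : MvPolynomial σ k →ₐ[k] k).toRingHom with hev
  have hspan : Ideal.span ((fun i => (X i : MvPolynomial σ k)) '' A) ≤ RingHom.ker ev := by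
    rw [Ideal.span_le]
    rintro _ ⟨a, ha, rfl⟩
    have h0 : ev (X a) = 0 := by
      simp [hev, if_neg (show a ≠ x from fun h => hx (h ▸ ha))]
    simpa [RingHom.mem_ker] using h0
  have h1 : ev (X x) = 0 := hspan hmem
  simp [hev] at h1

end Aux

theorem sd_cone_count {n : ℕ} (F : Type) [Fintype F] (μ : F → Fin n → ℕ)
    (S : F → Finset (Fin n)) (T : Finset (Fin n))
    (hcover : ∀ ν : Fin n → ℕ, (∀ i ∉ T, ν i = 0) →
      ∃ j, ν ∈ stanleyCone (μ j) (S j)) :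
    T.card = 0 ∨ ∃ j, T ⊆ S j := by
  classical
  by_contra hcon
  push_neg at hcon
  obtain ⟨hT0, hTS⟩ := hcon
  set N : ℕ := Fintype.card F + 1 with hN
  set Box : Finset (Fin n → ℕ) :=
    Fintype.piFinset (fun i => Finset.range (if i ∈ T then N else 1)) with hBox
  have hBoxcard : Box.card = N ^ T.card := by
    rw [hBox, Fintype.card_piFinset]
    have : ∀ i, (Finset.range (if i ∈ T then N else 1)).card = if i ∈ T then N else 1 := by
      intro i; rw [Finset.card_range]
    simp only [this]
    rw [Finset.prod_ite_mem, Finset.univ_inter, Finset.prod_const]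
  have hsub : Box ⊆ Finset.univ.biUnion
      (fun j => Box.filter (fun ν => ν ∈ stanleyCone (μ j) (S j))) := by
    intro ν hν
    have h0 : ∀ i ∉ T, ν i = 0 := by
      intro i hi
      have := Fintype.mem_piFinset.mp hν i
      rw [if_neg hi] at this
      simpa using this
    obtain ⟨j, hj⟩ := hcover ν h0
    exact Finset.mem_biUnion.mpr ⟨j, Finset.mem_univ j, Finset.mem_filter.mpr ⟨hν, hj⟩⟩
  have hfiber : ∀ j, (Box.filter (fun ν => ν ∈ stanleyCone (μ j) (S j))).card ≤
      N ^ (T.card - 1) := by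
    intro j
    have hinj : (Box.filter (fun ν => ν ∈ stanleyCone (μ j) (S j))).card ≤
        N ^ ((T ∩ S j).card) := by
      have : (Box.filter (fun ν => ν ∈ stanleyCone (μ j) (S j))).card ≤
          (Fintype.piFinset (fun i => Finset.range (if i ∈ T ∩ S j then N else 1))).card := by
        refine Finset.card_le_card_of_injOn
          (fun ν => fun i => if i ∈ T ∩ S j then ν i else 0) ?_ ?_
        · intro ν hν
          rw [Finset.mem_coe, Finset.mem_filter] at hν
          refine Fintype.mem_piFinset.mpr fun i => ?_
          by_cases h : i ∈ T ∩ S j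
          · simp only [h, if_true]
            rw [Finset.mem_range]
            have := Fintype.mem_piFinset.mp hν.1 i
            rw [if_pos (Finset.mem_of_mem_inter_left h)] at this
            exact Finset.mem_range.mp this
          · simp [h]
        · intro ν hν ν' hν' heq
          rw [Finset.mem_coe, Finset.mem_filter] at hν hν'
          funext i
          by_cases h : i ∈ T ∩ S j
          · have := congrFun heq i
            simpa [h] using this
          · by_cases hiT : i ∈ T
            · have hiS : i ∉ S j := fun hS => h (Finset.mem_inter.mpr ⟨hiT, hS⟩)
              rw [hν.2.1 i hiS, hν'.2.1 i hiS]
            · have h1 := Fintype.mem_piFinset.mp hν.1 i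
              have h2 := Fintype.mem_piFinset.mp hν'.1 i
              rw [if_neg hiT] at h1 h2
              simp only [Finset.mem_range, Nat.lt_one_iff] at h1 h2
              rw [h1, h2]
      calc (Box.filter (fun ν => ν ∈ stanleyCone (μ j) (S j))).card ≤ _ := this
        _ = N ^ ((T ∩ S j).card) := by
            rw [Fintype.card_piFinset]
            have : ∀ i, (Finset.range (if i ∈ T ∩ S j then N else 1)).card =
                if i ∈ T ∩ S j then N else 1 := fun i => Finset.card_range _
            simp only [this]
            rw [Finset.prod_ite_mem, Finset.univ_inter, Finset.prod_const]
    have hlt : (T ∩ S j).card < T.card := by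
      refine Finset.card_lt_card ?_
      refine ⟨Finset.inter_subset_left, fun hsub' => ?_⟩
      exact hTS j (fun x hx => Finset.mem_of_mem_inter_right (hsub' hx))
    calc (Box.filter _).card ≤ N ^ ((T ∩ S j).card) := hinj
      _ ≤ N ^ (T.card - 1) := Nat.pow_le_pow_right (by omega) (by omega)
  have htotal : Box.card ≤ Fintype.card F * N ^ (T.card - 1) := by
    calc Box.card ≤ (Finset.univ.biUnion
        (fun j => Box.filter (fun ν => ν ∈ stanleyCone (μ j) (S j)))).card :=
          Finset.card_le_card hsub
      _ ≤ ∑ j, (Box.filter (fun ν => ν ∈ stanleyCone (μ j) (S j))).card :=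
          Finset.card_biUnion_le
      _ ≤ ∑ _j : F, N ^ (T.card - 1) := Finset.sum_le_sum fun j _ => hfiber j
      _ = Fintype.card F * N ^ (T.card - 1) := by
          rw [Finset.sum_const, Finset.card_univ, smul_eq_mul]
  rw [hBoxcard] at htotal
  have hpow : N ^ T.card = N * N ^ (T.card - 1) := by
    conv_lhs => rw [show T.card = 1 + (T.card - 1) by omega]
    rw [pow_add, pow_one]
  have hNpos : 0 < N ^ (T.card - 1) := by positivity
  rw [hpow] at htotal
  have : N ≤ Fintype.card F := Nat.le_of_mul_le_mul_right htotal hNpos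
  omega


/-- If `R/I` has a Stanley decomposition `{(μ j, S j)}_{j ∈ F}`
(the cones partition the standard monomials of the proper monomial ideal `I`),
then the Krull dimension of `R/I` is the maximum of the cardinalities `|S j|`. -/
theorem stmt8 (k : Type) [Field k] (n : ℕ) (I : Ideal (MvPolynomial (Fin n) k))
    (hmon : IsMonomialIdeal I) (hproper : I ≠ ⊤)
    (F : Type) [Fintype F] (μ : F → Fin n → ℕ) (S : F → Finset (Fin n))
    (hdisj : ∀ j j' : F, j ≠ j' →
      Disjoint (stanleyCone (μ j) (S j)) (stanleyCone (μ j') (S j')))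
    (hunion : (⋃ j : F, stanleyCone (μ j) (S j)) = {ν | Xpow k n ν ∉ I})
    (d : ℕ) (hd : d = Finset.univ.sup fun j : F => (S j).card) :
    ringKrullDim (MvPolynomial (Fin n) k ⧸ I) = (d : WithBot ℕ∞) := by
  classical
  -- `X^ν` divides `X^ν'` when `ν ≤ ν'`, so `I` is upward closed on monomials
  have hup : ∀ ν ν' : Fin n → ℕ, (∀ i, ν i ≤ ν' i) → Xpow k n ν ∈ I → Xpow k n ν' ∈ I := by
    intro ν ν' hle hmem
    have hfac : Xpow k n ν' = (∏ i, (X i : MvPolynomial (Fin n) k) ^ (ν' i - ν i)) * Xpow k n ν := by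
      rw [Xpow, Xpow, ← Finset.prod_mul_distrib]
      refine Finset.prod_congr rfl fun i _ => ?_
      rw [← pow_add]
      congr 1
      have := hle i
      omega
    rw [hfac]
    exact Ideal.mul_mem_left _ _ hmem
  -- monomials supported inside some `S j` are standard
  have hsupp : ∀ (j : F) (ν : Fin n → ℕ), (∀ i ∉ S j, ν i = 0) → Xpow k n ν ∉ I := by
    intro j ν hν hmem
    set ν' : Fin n → ℕ := fun i => if i ∈ S j then max (ν i) (μ j i) else μ j i with hν'
    have hcone : ν' ∈ stanleyCone (μ j) (S j) := by
      constructor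
      · intro i hi
        simp [hν', if_neg hi]
      · intro i hi
        simp [hν', if_pos hi]
    have hle : ∀ i, ν i ≤ ν' i := by
      intro i
      by_cases h : i ∈ S j
      · simp [hν', h]
      · simp [hν', h, hν i h]
    have hmem' : ν' ∈ ⋃ j, stanleyCone (μ j) (S j) := Set.mem_iUnion.mpr ⟨j, hcone⟩
    rw [hunion] at hmem'
    exact hmem' (hup ν ν' hle hmem)
  -- `F` is nonempty
  have hone : Xpow k n 0 ∉ I := by
    intro h
    apply hproper
    rw [Ideal.eq_top_iff_one]
    simpa [Xpow] using h
  have h0mem : (0 : Fin n → ℕ) ∈ ⋃ j, stanleyCone (μ j) (S j) := by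
    rw [hunion]; exact hone
  obtain ⟨jne, -⟩ := Set.mem_iUnion.mp h0mem
  -- pick `j₀` achieving the max
  obtain ⟨j₀, -, hj₀⟩ := Finset.exists_mem_eq_sup (Finset.univ : Finset F)
    ⟨jne, Finset.mem_univ jne⟩ (fun j => (S j).card)
  have hcardj₀ : (S j₀).card = d := by rw [hd, hj₀]
  -- `I` is contained in the face prime of `S j₀`
  have hgen : ∀ s : Fin n → ℕ, Xpow k n s ∈ I → ∃ i, i ∉ S j₀ ∧ s i ≠ 0 := by
    intro s hs
    by_contra hcon
    push_neg at hcon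
    exact hsupp j₀ s hcon hs
  have hIJ₀ : I ≤ Ideal.span ((fun i => (X i : MvPolynomial (Fin n) k)) ''
      ((↑(S j₀) : Set (Fin n))ᶜ)) := by
    obtain ⟨S0, hS0⟩ := hmon
    rw [hS0, Ideal.span_le]
    rintro _ ⟨s, hsS0, rfl⟩
    have hsI : Xpow k n s ∈ I := hS0 ▸ Ideal.subset_span (Set.mem_image_of_mem _ hsS0)
    obtain ⟨i, hiS, hsi⟩ := hgen s hsI
    have h1 : Xpow k n s ∈ Ideal.span {(X i : MvPolynomial (Fin n) k)} := by
      refine Ideal.mem_span_singleton.mpr ?_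
      exact dvd_trans (dvd_pow_self _ hsi) (Finset.dvd_prod_of_mem _ (Finset.mem_univ i))
    refine Ideal.span_mono ?_ h1
    exact Set.singleton_subset_iff.mpr ⟨i, hiS, rfl⟩
  -- the ascending chain of face primes giving the lower bound
  set ord := (S j₀).orderIsoOfFin hcardj₀ with hord
  set A : ℕ → Set (Fin n) := fun i =>
    (↑(S j₀) : Set (Fin n))ᶜ ∪ (fun l : Fin d => (ord l : Fin n)) '' {l | (l : ℕ) < i} with hA
  set P : ℕ → Ideal (MvPolynomial (Fin n) k) := fun i =>
    Ideal.span ((fun i => (X i : MvPolynomial (Fin n) k)) '' A i) with hP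
  have hPdef : ∀ i, P i = Ideal.span ((fun i => (X i : MvPolynomial (Fin n) k)) '' A i) :=
    fun _ => rfl
  have hAdef : ∀ i, A i =
      (↑(S j₀) : Set (Fin n))ᶜ ∪ (fun l : Fin d => (ord l : Fin n)) '' {l | (l : ℕ) < i} :=
    fun _ => rfl
  have hPprime : ∀ i, (P i).IsPrime := fun i => sd_span_vars_prime (A i)
  have hAmono : ∀ i i' : ℕ, i ≤ i' → A i ⊆ A i' := by
    intro i i' hii
    rw [hAdef, hAdef]
    refine Set.union_subset_union_right _ (Set.image_mono ?_)
    intro l hl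
    exact lt_of_lt_of_le hl hii
  have hstep : ∀ i : ℕ, i < d → P i < P (i + 1) := by
    intro i hi
    have hle : P i ≤ P (i + 1) := by
      rw [hPdef, hPdef]
      exact Ideal.span_mono (Set.image_mono (hAmono i (i+1) (Nat.le_succ i)))
    refine lt_of_le_of_ne hle ?_
    intro heq
    set x : Fin n := (ord ⟨i, hi⟩ : Fin n) with hx
    have hxin : (X x : MvPolynomial (Fin n) k) ∈ P (i + 1) := by
      rw [hPdef]
      exact Ideal.subset_span ⟨x, Or.inr ⟨⟨i, hi⟩, by simp, rfl⟩, rfl⟩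
    have hxA : x ∉ A i := by
      rw [hAdef]
      rintro (h | ⟨l, hl, hlx⟩)
      · exact h (ord ⟨i, hi⟩).2
      · have : l = ⟨i, hi⟩ := ord.injective (Subtype.coe_injective hlx)
        rw [this] at hl
        exact absurd hl (lt_irrefl i)
    have hxnot : (X x : MvPolynomial (Fin n) k) ∉ P i := by
      rw [hPdef]
      exact sd_X_notMem_span (A i) x hxA
    rw [heq] at hxnot
    exact hxnot hxin
  have hIP : ∀ i : ℕ, I ≤ P i := by
    intro i
    refine le_trans hIJ₀ ?_
    rw [hPdef]
    refine Ideal.span_mono (Set.image_mono ?_)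
    rw [hAdef]
    exact Set.subset_union_left
  -- push the chain into `R ⧸ I`
  have hcomap : ∀ i : ℕ, Ideal.comap (Ideal.Quotient.mk I)
      (Ideal.map (Ideal.Quotient.mk I) (P i)) = P i := by
    intro i
    rw [Ideal.comap_map_of_surjective _ Ideal.Quotient.mk_surjective]
    have : Ideal.comap (Ideal.Quotient.mk I) ⊥ = I := by
      rw [← RingHom.ker_eq_comap_bot, Ideal.mk_ker]
    rw [this]
    exact sup_eq_left.mpr (hIP i)
  set f : Fin (d + 1) → PrimeSpectrum (MvPolynomial (Fin n) k ⧸ I) := fun i =>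
    ⟨Ideal.map (Ideal.Quotient.mk I) (P i),
      Ideal.map_isPrime_of_surjective Ideal.Quotient.mk_surjective
        (by rw [Ideal.mk_ker]; exact hIP i)⟩ with hf
  have hfstep : ∀ i : Fin d, f i.castSucc < f i.succ := by
    intro i
    have h1 : P (i : ℕ) < P ((i : ℕ) + 1) := hstep i i.isLt
    rw [← PrimeSpectrum.asIdeal_lt_asIdeal]
    show Ideal.map (Ideal.Quotient.mk I) (P (i.castSucc : ℕ)) <
      Ideal.map (Ideal.Quotient.mk I) (P (i.succ : ℕ))
    rw [Fin.coe_castSucc, Fin.val_succ]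
    refine lt_of_le_of_ne (Ideal.map_mono h1.le) ?_
    intro heq
    have := congrArg (Ideal.comap (Ideal.Quotient.mk I)) heq
    rw [hcomap, hcomap] at this
    exact h1.ne this
  have hlow : (d : WithBot ℕ∞) ≤ ringKrullDim (MvPolynomial (Fin n) k ⧸ I) := by
    rw [ringKrullDim]
    exact Order.LTSeries.length_le_krullDim (⟨d, f, hfstep⟩ : LTSeries _)
  -- upper bound
  have hupper : ringKrullDim (MvPolynomial (Fin n) k ⧸ I) ≤ (d : WithBot ℕ∞) := by
    rw [ringKrullDim, Order.krullDim]
    refine iSup_le fun p => ?_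
    set P' : Fin (p.length + 1) → Ideal (MvPolynomial (Fin n) k) := fun i =>
      Ideal.comap (Ideal.Quotient.mk I) (p i).asIdeal with hP'
    have hP'def : ∀ i, P' i = Ideal.comap (Ideal.Quotient.mk I) (p i).asIdeal := fun _ => rfl
    have hP'prime : ∀ i, (P' i).IsPrime := fun i => by
      rw [hP'def]
      exact Ideal.IsPrime.comap _
    have hIP' : ∀ i, I ≤ P' i := by
      intro i x hx
      rw [hP'def]
      show Ideal.Quotient.mk I x ∈ (p i).asIdeal
      rw [Ideal.Quotient.eq_zero_iff_mem.mpr hx]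
      exact zero_mem _
    have hP'mono : ∀ i i' : Fin (p.length + 1), i ≤ i' → P' i ≤ P' i' := by
      intro i i' hii
      rw [hP'def, hP'def]
      exact Ideal.comap_mono ((PrimeSpectrum.asIdeal_le_asIdeal _ _).mpr (p.monotone hii))
    have hP'inj : ∀ i i' : Fin (p.length + 1), P' i = P' i' → p i = p i' := by
      intro i i' hii
      rw [hP'def, hP'def] at hii
      exact PrimeSpectrum.ext
        (Ideal.comap_injective_of_surjective _ Ideal.Quotient.mk_surjective hii)
    set T : Finset (Fin n) :=
      Finset.univ.filter (fun x => (X x : MvPolynomial (Fin n) k) ∉ P' 0) with hT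
    have hcover : ∀ ν : Fin n → ℕ, (∀ i ∉ T, ν i = 0) →
        ∃ j, ν ∈ stanleyCone (μ j) (S j) := by
      intro ν hν
      have hnotI : Xpow k n ν ∉ I := by
        intro hmem
        have h1 : Xpow k n ν ∈ P' 0 := hIP' 0 hmem
        rw [Xpow] at h1
        haveI := hP'prime 0
        obtain ⟨i, -, hi⟩ := (Ideal.IsPrime.prod_mem_iff).mp h1
        have hνi : ν i ≠ 0 := by
          intro h0
          rw [h0, pow_zero] at hi
          exact (hP'prime 0).ne_top (Ideal.eq_top_of_isUnit_mem _ hi isUnit_one)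
        have hXi : (X i : MvPolynomial (Fin n) k) ∈ P' 0 := (hP'prime 0).mem_of_pow_mem _ hi
        have hiT : i ∈ T := by
          by_contra hiT
          exact hνi (hν i hiT)
        rw [hT] at hiT
        exact (Finset.mem_filter.mp hiT).2 hXi
      have hν2 : ν ∈ ⋃ j, stanleyCone (μ j) (S j) := by rw [hunion]; exact hnotI
      exact Set.mem_iUnion.mp hν2
    have hTd : T.card ≤ d := by
      rcases sd_cone_count F μ S T hcover with h | ⟨j, hj⟩
      · omega
      · have h1 : T.card ≤ (S j).card := Finset.card_le_card hj
        have h2 : (S j).card ≤ Finset.univ.sup fun j : F => (S j).card :=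
          Finset.le_sup (f := fun j : F => (S j).card) (Finset.mem_univ j)
        omega
    set JT : Ideal (MvPolynomial (Fin n) k) :=
      Ideal.span ((fun i => (X i : MvPolynomial (Fin n) k)) '' ((↑T : Set (Fin n))ᶜ)) with hJT
    have hJTP' : ∀ i, JT ≤ P' i := by
      intro i
      rw [hJT, Ideal.span_le]
      rintro _ ⟨x, hx, rfl⟩
      have hx' : x ∉ T := by simpa using hx
      have hx0 : (X x : MvPolynomial (Fin n) k) ∈ P' 0 := by
        by_contra hc
        exact hx' (by rw [hT]; exact Finset.mem_filter.mpr ⟨Finset.mem_univ x, hc⟩)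
      exact hP'mono 0 i (Fin.zero_le i) hx0
    have hcomap2 : ∀ i, Ideal.comap (Ideal.Quotient.mk JT)
        (Ideal.map (Ideal.Quotient.mk JT) (P' i)) = P' i := by
      intro i
      rw [Ideal.comap_map_of_surjective _ Ideal.Quotient.mk_surjective]
      have : Ideal.comap (Ideal.Quotient.mk JT) ⊥ = JT := by
        rw [← RingHom.ker_eq_comap_bot, Ideal.mk_ker]
      rw [this]
      exact sup_eq_left.mpr (hJTP' i)
    set g : Fin (p.length + 1) → PrimeSpectrum (MvPolynomial (Fin n) k ⧸ JT) := fun i =>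
      ⟨Ideal.map (Ideal.Quotient.mk JT) (P' i),
        haveI := hP'prime i
        Ideal.map_isPrime_of_surjective Ideal.Quotient.mk_surjective
          (by rw [Ideal.mk_ker]; exact hJTP' i)⟩ with hg
    have hgstep : ∀ i : Fin p.length, g i.castSucc < g i.succ := by
      intro i
      rw [← PrimeSpectrum.asIdeal_lt_asIdeal]
      show Ideal.map (Ideal.Quotient.mk JT) (P' i.castSucc) <
        Ideal.map (Ideal.Quotient.mk JT) (P' i.succ)
      refine lt_of_le_of_ne
        (Ideal.map_mono (hP'mono _ _ (le_of_lt (Fin.castSucc_lt_succ (i := i))))) ?_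
      intro heq
      have := congrArg (Ideal.comap (Ideal.Quotient.mk JT)) heq
      rw [hcomap2, hcomap2] at this
      exact (p.step i).ne (hP'inj _ _ this)
    have h1 : (p.length : WithBot ℕ∞) ≤ ringKrullDim (MvPolynomial (Fin n) k ⧸ JT) := by
      rw [ringKrullDim]
      exact Order.LTSeries.length_le_krullDim (⟨p.length, g, hgstep⟩ : LTSeries _)
    have h2 : ringKrullDim (MvPolynomial (Fin n) k ⧸ JT) ≤ (T.card : WithBot ℕ∞) := by
      have := sd_dim_quot_le (k := k) (σ := Fin n) (↑T : Set (Fin n))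
      rw [hJT]
      convert this using 2
      simp [Fintype.card_coe]
    refine le_trans h1 (le_trans h2 ?_)
    exact_mod_cast Nat.cast_le.mpr hTd
  exact le_antisymm hupper hlow
end
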